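/- arXiv:1901.05368 — 2 statements merged into one kernel-verified Lean document; each statement's English description precedes it below -/
import Mathlib

section
/- Let A be a central simple algebra over a field k. For every ring automorphism α of A (not necessarily k-linear) and every x ∈ A, one has Nrd(α(x)) = α(Nrd(x)), where Nrd denotes the reduced norm of A and α acts on k via its restriction to the center. -/
/-!
The automorphism `α` restricts to an automorphism `σ` of the centre `k`, and `σ` extends to an
automorphism `τ` of the algebraic closure `K`. For a splitting `f : K ⊗[k] A ≃ₐ[K] Mₘ(K)`, the map
`y ↦ τ⁻¹ (f (1 ⊗ α y))` is `k`-linear, hence induces a `K`-algebra map `K ⊗[k] A → Mₘ(K)`.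
Composed with `f⁻¹` it is a `K`-algebra endomorphism of `Mₘ(K)`, which preserves determinants
by Skolem–Noether. Thus `det f (1 ⊗ α x) = τ (det f (1 ⊗ x))`, i.e. `Nrd (α x) = σ (Nrd x)`.
-/

open scoped TensorProduct

/-- `Nrd : A → k` is the reduced norm of the central simple `k`-algebra `A`: after base change
to an algebraic closure, `A` becomes a matrix algebra and `Nrd` is computed by the
determinant. -/
def IsReducedNorm (k : Type*) [Field k] (A : Type*) [Ring A] [Algebra k A]
    (Nrd : A → k) : Prop :=
  ∃ (m : ℕ)
    (f : (AlgebraicClosure k) ⊗[k] A ≃ₐ[AlgebraicClosure k]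
        Matrix (Fin m) (Fin m) (AlgebraicClosure k)),
    ∀ x : A,
      algebraMap k (AlgebraicClosure k) (Nrd x) = Matrix.det (f ((1 : AlgebraicClosure k) ⊗ₜ[k] x))

noncomputable def Algebra.IsCentral.baseEquivCenter (k A : Type*) [Field k] [Ring A]
    [Nontrivial A] [Algebra k A] [Algebra.IsCentral k A] : k ≃+* Subsemiring.center A :=
  RingEquiv.ofBijective ((algebraMap k A).codRestrict _ Set.algebraMap_mem_center)
    ⟨fun c d h => (algebraMap k A).injective congr(($h : A)), fun z => by
      obtain ⟨c, hc⟩ := (mem_center_iff k).1 z.2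
      exact ⟨c, Subtype.ext hc.symm⟩⟩

lemma RingEquiv.exists_apply_algebraMap_eq (k : Type*) {A : Type*} [Field k] [Ring A] [Nontrivial A]
    [Algebra k A] [Algebra.IsCentral k A] (α : A ≃+* A) :
    ∃ σ : k ≃+* k, ∀ c, α (algebraMap k A c) = algebraMap k A (σ c) := by
  let e := Algebra.IsCentral.baseEquivCenter k A
  refine ⟨(e.trans (Subsemiring.centerCongr α)).trans e.symm, fun c => ?_⟩
  calc α (algebraMap k A c) = (Subsemiring.centerCongr α (e c) : A) := rfl
    _ = e (e.symm (Subsemiring.centerCongr α (e c))) := by rw [e.apply_symm_apply]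

namespace AlgEquiv

variable {k K A n : Type*} [Field k] [Field K] [Algebra k K] [Ring A] [Algebra k A]
  [Fintype n] [DecidableEq n] {σ : k ≃+* k} {τ : K ≃+* K} {α : A ≃+* A}
  (f : K ⊗[k] A ≃ₐ[K] Matrix n n K)

noncomputable def twistedAlgHom
    (hτ : ∀ c, τ (algebraMap k K c) = algebraMap k K (σ c))
    (hα : ∀ c, α (algebraMap k A c) = algebraMap k A (σ c)) : A →ₐ[k] Matrix n n K where
  toRingHom := (τ.symm.mapMatrix (m := n)).toRingHom.comp <|
    (f : K ⊗[k] A →+* Matrix n n K).comp <|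
      (Algebra.TensorProduct.includeRight : A →ₐ[k] K ⊗[k] A).toRingHom.comp α
  commutes' c := by
    have hτ' : τ.symm (algebraMap k K (σ c)) = algebraMap k K c :=
      τ.symm_apply_eq.2 (hτ c).symm
    have hf : f (algebraMap k K (σ c) ⊗ₜ[k] 1) = algebraMap K _ (algebraMap k K (σ c)) :=
      f.commutes _
    simp [hα, hf, Matrix.algebraMap_eq_diagonal, hτ']

lemma twistedAlgHom_apply
    (hτ : ∀ c, τ (algebraMap k K c) = algebraMap k K (σ c))
    (hα : ∀ c, α (algebraMap k A c) = algebraMap k A (σ c)) (x : A) :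
    twistedAlgHom f hτ hα x = (f (1 ⊗ₜ α x)).map τ.symm := rfl

lemma det_apply_one_tmul_ringEquiv
    (hτ : ∀ c, τ (algebraMap k K c) = algebraMap k K (σ c))
    (hα : ∀ c, α (algebraMap k A c) = algebraMap k A (σ c)) (x : A) :
    (f (1 ⊗ₜ α x)).det = τ (f (1 ⊗ₜ x)).det := by
  let g : Matrix n n K →ₐ[K] Matrix n n K :=
    (AlgHom.liftEquiv k K A _ (twistedAlgHom f hτ hα)).comp f.symm.toAlgHom
  have hg : g (f (1 ⊗ₜ x)) = (f (1 ⊗ₜ α x)).map τ.symm := by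
    simp [g, twistedAlgHom_apply]
  rw [← Matrix.det_map' g (f (1 ⊗ₜ x)), hg, ← RingEquiv.mapMatrix_apply, ← RingEquiv.map_det,
    RingEquiv.apply_symm_apply]

end AlgEquiv

theorem reducedNorm_ringAut_comm_general
    (k : Type*) [Field k] (A : Type*) [Ring A] [Algebra k A]
    [IsSimpleRing A]
    (hcentral : Subalgebra.center k A = ⊥)
    (Nrd : A → k) (hNrd : IsReducedNorm k A Nrd)
    (α : A ≃+* A) (x : A) :
    algebraMap k A (Nrd (α x)) = α (algebraMap k A (Nrd x)) := by
  have : Algebra.IsCentral k A := ⟨hcentral.le⟩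
  obtain ⟨σ, hα⟩ := α.exists_apply_algebraMap_eq k
  let K := AlgebraicClosure k
  have hτ := IsAlgClosure.equivOfEquiv_algebraMap K K σ
  obtain ⟨m, f, hf⟩ := hNrd
  have hNrd_α : Nrd (α x) = σ (Nrd x) := (algebraMap k K).injective <| by
    rw [hf, f.det_apply_one_tmul_ringEquiv hτ hα, ← hf, hτ]
  rw [hNrd_α, hα]

/-- Let `A` be a central simple algebra over a field `k`. For every ring
automorphism `α` of `A` (not necessarily `k`-linear) and every `x ∈ A`, one has
`Nrd (α x) = α (Nrd x)`, where `α` acts on `k` via its restriction to the center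
(so the identity is read inside `A` through `algebraMap k A`). -/
theorem reducedNorm_ringAut_comm
    (k : Type*) [Field k] (A : Type*) [Ring A] [Algebra k A]
    [FiniteDimensional k A] [IsSimpleRing A]
    (hcentral : Subalgebra.center k A = ⊥)
    (Nrd : A → k) (hNrd : IsReducedNorm k A Nrd)
    (α : A ≃+* A) (x : A) :
    algebraMap k A (Nrd (α x)) = α (algebraMap k A (Nrd x)) :=
  reducedNorm_ringAut_comm_general k A hcentral Nrd hNrd α x
end

section
/- Let l/k be a finite cyclic field extension of degree d with Galois group generated by σ, let a ∈ k×, and let A(l/k, σ, a) be the associated cyclic algebra. Suppose α is an automorphism of l with α(k) = k that commutes with σ, and x ∈ l satisfies N_{l/k}(x) = α(a)/a. Then the map sending Σ u^i a_i to Σ (ux)^i α(a_i) is a ring automorphism of A(l/k, σ, a). -/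
/-!
Put `v = u * ι x`. Since `α` commutes with `σ`, `v` induces `σ` on `ι (α l)` just as `u` does
on `ι l`, and `v ^ d = u ^ d * ι (x · σ x ⋯ σ^(d-1) x) = a · N(x) = α(a)`. The multiplication of
`A` in the coordinates `Σ u^i ι(c_i)` only involves `σ` and `a`, so the map
`Σ u^i ι(c_i) ↦ Σ v^i ι(α c_i)` is multiplicative. It is bijective because
`v ^ i = u ^ i * ι (x · σ x ⋯ σ^(i-1) x)` and these partial norms are units.
-/

open Finset Function

section PowMulSum

variable {l R : Type*} [CommSemiring l] [Semiring R]

def powMulSum (f : l →+* R) (t : R) (d : ℕ) : (Fin d → l) →+ R where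
  toFun c := ∑ i : Fin d, t ^ (i : ℕ) * f (c i)
  map_zero' := by simp
  map_add' c c' := by simp [mul_add, sum_add_distrib]

@[simp]
lemma powMulSum_apply (f : l →+* R) (t : R) {d : ℕ} (c : Fin d → l) :
    powMulSum f t d c = ∑ i : Fin d, t ^ (i : ℕ) * f (c i) :=
  rfl

lemma powMulSum_single (f : l →+* R) (t : R) {d : ℕ} (i : Fin d) (b : l) :
    powMulSum f t d (Pi.single i b) = t ^ (i : ℕ) * f b := by
  rw [powMulSum_apply, sum_eq_single i (fun j _ hj => by simp [hj]) (by simp)]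
  simp

/-- `t` induces `σ` on the image of `f`: in a cyclic algebra, `u⁻¹ f(y) u = f(σ y)`. -/
def TwistsBy (f : l →+* R) (σ : l →+* l) (t : R) : Prop :=
  ∀ y, f y * t = t * f (σ y)

/-- Products of two monomials `t ^ i * f b`, reduced with `t ^ d = f c₀`. -/
def cyclicMulTerm (σ : l →+* l) (c₀ : l) {d : ℕ} (i j : Fin d) (b c : l) : Fin d → l :=
  if h : (i : ℕ) + j < d then Pi.single ⟨i + j, h⟩ ((σ ^ (j : ℕ)) b * c)
  else Pi.single ⟨i + j - d, by omega⟩ (c₀ * ((σ ^ (j : ℕ)) b * c))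

def cyclicMul (σ : l →+* l) (c₀ : l) {d : ℕ} (c c' : Fin d → l) : Fin d → l :=
  ∑ i, ∑ j, cyclicMulTerm σ c₀ i j (c i) (c' j)

namespace TwistsBy

variable {f : l →+* R} {σ : l →+* l} {t : R}

lemma pow (ht : TwistsBy f σ t) (n : ℕ) : TwistsBy f (σ ^ n) (t ^ n) := by
  induction n with
  | zero => simp [TwistsBy]
  | succ n ih =>
    intro y
    rw [pow_succ, ← mul_assoc, ih y, mul_assoc, ht, ← mul_assoc, pow_succ', RingHom.coe_mul,
      comp_apply]

lemma mul_map (ht : TwistsBy f σ t) (x : l) : TwistsBy f σ (t * f x) := by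
  intro y
  rw [← mul_assoc, ht, mul_assoc, mul_assoc, ← map_mul, ← map_mul, mul_comm]

lemma comp (ht : TwistsBy f σ t) {α : l →+* l} (hασ : ∀ y, α (σ y) = σ (α y)) :
    TwistsBy (f.comp α) σ t := by
  intro y
  simp only [RingHom.comp_apply, ht (α y), hασ]

lemma pow_mul_mul_pow_mul (ht : TwistsBy f σ t) (m n : ℕ) (b c : l) :
    (t ^ m * f b) * (t ^ n * f c) = t ^ (m + n) * f ((σ ^ n) b * c) := by
  rw [mul_assoc, ← mul_assoc (f b), ht.pow, mul_assoc, ← mul_assoc, ← pow_add, map_mul]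

lemma mul_map_pow (ht : TwistsBy f σ t) (x : l) (n : ℕ) :
    (t * f x) ^ n = t ^ n * f (∏ j ∈ range n, (σ ^ j) x) := by
  induction n with
  | zero => simp
  | succ n ih =>
    rw [pow_succ, ih, ← mul_assoc, mul_assoc (t ^ n), ht, ← mul_assoc, ← pow_succ, mul_assoc,
      ← map_mul, prod_range_succ', pow_zero, RingHom.coe_one, id, map_prod]
    simp only [pow_succ', RingHom.coe_mul, comp_apply]

lemma monomial_mul_monomial (ht : TwistsBy f σ t) {d : ℕ} {c₀ : l} (htd : t ^ d = f c₀)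
    (i j : Fin d) (b c : l) :
    (t ^ (i : ℕ) * f b) * (t ^ (j : ℕ) * f c) = powMulSum f t d (cyclicMulTerm σ c₀ i j b c) := by
  rw [ht.pow_mul_mul_pow_mul, cyclicMulTerm]
  split_ifs with h
  · rw [powMulSum_single]
  · rw [powMulSum_single, map_mul f c₀, ← mul_assoc, ← htd, ← pow_add]
    simp only [Nat.sub_add_cancel (not_lt.1 h)]

lemma powMulSum_mul (ht : TwistsBy f σ t) {d : ℕ} {c₀ : l} (htd : t ^ d = f c₀)
    (c c' : Fin d → l) :
    powMulSum f t d c * powMulSum f t d c' = powMulSum f t d (cyclicMul σ c₀ c c') := by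
  simp only [cyclicMul, map_sum, ← ht.monomial_mul_monomial htd]
  rw [powMulSum_apply, powMulSum_apply, sum_mul_sum]

lemma powMulSum_mul_map (ht : TwistsBy f σ t) (x : l) {d : ℕ} (c : Fin d → l) :
    powMulSum f (t * f x) d c = powMulSum f t d fun i => (∏ j ∈ range i, (σ ^ j) x) * c i := by
  simp only [powMulSum_apply, ht.mul_map_pow, mul_assoc, map_mul]

lemma bijective_powMulSum_mul_map (ht : TwistsBy f σ t) {d : ℕ}
    (hbij : Bijective (powMulSum f t d)) {x : l} (hx : IsUnit x) :
    Bijective (powMulSum f (t * f x) d) := by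
  have hunit (i : Fin d) : IsUnit (∏ j ∈ range i, (σ ^ j) x) :=
    IsUnit.prod_iff.2 fun j _ => hx.map _
  have hmul : Bijective (Pi.map fun (i : Fin d) (b : l) => (∏ j ∈ range i, (σ ^ j) x) * b) :=
    .piMap fun i => IsUnit.isUnit_iff_mulLeft_bijective.1 (hunit i)
  have hcomp : ⇑(powMulSum f (t * f x) d) = powMulSum f t d ∘ Pi.map fun i b => _ * b :=
    funext (ht.powMulSum_mul_map x)
  exact hcomp ▸ hbij.comp hmul

end TwistsBy

end PowMulSum

theorem exists_ringHom_powMulSum {l A B : Type*} [CommSemiring l] [Semiring A] [Semiring B]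
    {d : ℕ} (hd : 0 < d) {σ : l →+* l} {c₀ : l} {ι : l →+* A} {u : A} (hu : TwistsBy ι σ u)
    (hud : u ^ d = ι c₀) (hfree : Bijective (powMulSum ι u d)) {ψ : l →+* B} {w : B}
    (hw : TwistsBy ψ σ w) (hwd : w ^ d = ψ c₀) :
    ∃ F : A →+* B, ∀ c, F (powMulSum ι u d c) = powMulSum ψ w d c := by
  let e := AddEquiv.ofBijective (powMulSum ι u d) hfree
  let F : A →+ B := (powMulSum ψ w d).comp e.symm.toAddMonoidHom
  have hF (c : Fin d → l) : F (powMulSum ι u d c) = powMulSum ψ w d c :=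
    congr_arg (powMulSum ψ w d) (e.symm_apply_apply c)
  have hF_one : F 1 = 1 := by
    have h := hF (Pi.single ⟨0, hd⟩ 1)
    simpa only [powMulSum_single, pow_zero, map_one, mul_one] using h
  have hF_mul (z z' : A) : F (z * z') = F z * F z' := by
    obtain ⟨c, rfl⟩ := hfree.2 z
    obtain ⟨c', rfl⟩ := hfree.2 z'
    rw [hu.powMulSum_mul hud, hF, hF, hF, hw.powMulSum_mul hwd]
  exact ⟨{ F with map_one' := hF_one, map_mul' := hF_mul }, hF⟩

theorem algebraMap_norm_eq_prod_range_pow {K L : Type*} [Field K] [Field L] [Algebra K L]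
    [FiniteDimensional K L] [IsGalois K L] {σ : L ≃ₐ[K] L}
    (hσ : ∀ τ : L ≃ₐ[K] L, τ ∈ Subgroup.zpowers σ) (x : L) :
    algebraMap K L (Algebra.norm K x) = ∏ i ∈ range (Module.finrank K L), (σ ^ i) x := by
  classical
  rw [Algebra.norm_eq_prod_automorphisms, ← IsCyclic.image_range_orderOf hσ,
    prod_image fun i hi j hj => pow_injOn_Iio_orderOf (by simpa using hi) (by simpa using hj),
    orderOf_eq_card_of_forall_mem_zpowers hσ, IsGalois.card_aut_eq_finrank]

theorem cyclicAlgebra_semilinear_aut_general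
    (k l : Type*) [Field k] [Field l] [Algebra k l] [FiniteDimensional k l] [IsGalois k l]
    (d : ℕ) (hdeg : Module.finrank k l = d)
    (σ : l ≃ₐ[k] l) (hσ : ∀ τ : l ≃ₐ[k] l, τ ∈ Subgroup.zpowers σ)
    (a : k) (ha : a ≠ 0)
    (A : Type*) [Ring A] [Algebra k A]
    (ι : l →ₐ[k] A) (u : A)
    (hu : u ^ d = algebraMap k A a)
    (hcomm : ∀ y : l, ι y * u = u * ι (σ y))
    (hfree : ∀ z : A, ∃! c : Fin d → l, z = ∑ i : Fin d, u ^ (i : ℕ) * ι (c i))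
    (α : l ≃+* l)
    (hασ : ∀ y : l, α (σ y) = σ (α y))
    (x : l) (hx : α (algebraMap k l a) = algebraMap k l (Algebra.norm k x * a)) :
    ∃ φ : A ≃+* A, ∀ c : Fin d → l,
      φ (∑ i : Fin d, u ^ (i : ℕ) * ι (c i)) =
        ∑ i : Fin d, (u * ι x) ^ (i : ℕ) * ι (α (c i)) := by
  have hd : 0 < d := hdeg ▸ Module.finrank_pos
  have hx0 : x ≠ 0 := by
    rintro rfl
    simp only [Algebra.norm_zero, zero_mul, map_zero, map_eq_zero_iff _ α.injective,
      FaithfulSMul.algebraMap_eq_zero_iff] at hx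
    exact ha hx
  have hu_twists : TwistsBy (ι : l →+* A) σ u := hcomm
  have hu_pow : u ^ d = ι (algebraMap k l a) := by rw [hu, ι.commutes]
  have hu_free : Bijective (powMulSum (ι : l →+* A) u d) :=
    (bijective_iff_existsUnique _).2 fun z => by
      simpa only [powMulSum_apply, AlgHom.coe_toRingHom, eq_comm] using hfree z
  have hv_twists : TwistsBy ((ι : l →+* A).comp (α : l →+* l)) (σ : l →+* l) (u * ι x) :=
    (hu_twists.mul_map x).comp hασ
  have hv_pow : (u * ι x) ^ d = ((ι : l →+* A).comp (α : l →+* l)) (algebraMap k l a) := by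
    have hnorm : ∏ j ∈ range d, ((σ : l →+* l) ^ j) x = algebraMap k l (Algebra.norm k x) := by
      simp [algebraMap_norm_eq_prod_range_pow hσ, hdeg]
    calc (u * ι x) ^ d = u ^ d * ι (∏ j ∈ range d, ((σ : l →+* l) ^ j) x) :=
          hu_twists.mul_map_pow x d
      _ = ι (algebraMap k l (Algebra.norm k x * a)) := by
          rw [hu_pow, hnorm, ← map_mul, ← map_mul, mul_comm]
      _ = _ := by rw [← hx]; rfl
  obtain ⟨F, hF⟩ := exists_ringHom_powMulSum hd hu_twists hu_pow hu_free hv_twists hv_pow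
  have hF_bij : Bijective F := by
    refine (Bijective.of_comp_iff F hu_free).1 ?_
    have hv_free := hu_twists.bijective_powMulSum_mul_map hu_free (isUnit_iff_ne_zero.2 hx0)
    have hcomp : ⇑F ∘ powMulSum (ι : l →+* A) u d =
        powMulSum (ι : l →+* A) (u * ι x) d ∘ (α ∘ ·) := funext hF
    exact hcomp ▸ hv_free.comp α.bijective.comp_left
  exact ⟨RingEquiv.ofBijective F hF_bij, hF⟩

/-- Let `l/k` be a finite cyclic extension of degree `d` with Galois group
generated by `σ`, let `a ∈ k×`, and let `A = A(l/k, σ, a)` be the associated cyclic algebra,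
presented by a `k`-algebra `A` with an embedding `ι : l → A` and an element `u` such that
`u ^ d = a`, `ι x * u = u * ι (σ x)` (i.e. `u⁻¹ x u = σ x`), and `A = ⊕_{i<d} u^i · ι(l)`
freely.  Suppose `α` is an automorphism of `l` with `α (k) = k` commuting with `σ`, and
`x ∈ l` satisfies `N_{l/k}(x) = α(a)/a`, i.e. `α(a) = N_{l/k}(x) * a`.  Then the map sending
`Σ u^i ι(a_i)` to `Σ (u * ι x)^i ι(α a_i)` is a ring automorphism of `A`. -/
theorem cyclicAlgebra_semilinear_aut
    (k l : Type*) [Field k] [Field l] [Algebra k l] [FiniteDimensional k l] [IsGalois k l]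
    (d : ℕ) (hd : 0 < d) (hdeg : Module.finrank k l = d)
    (σ : l ≃ₐ[k] l) (hσ : ∀ τ : l ≃ₐ[k] l, τ ∈ Subgroup.zpowers σ)
    (a : k) (ha : a ≠ 0)
    (A : Type*) [Ring A] [Algebra k A]
    (ι : l →ₐ[k] A) (u : A)
    (hu : u ^ d = algebraMap k A a)
    (hcomm : ∀ y : l, ι y * u = u * ι (σ y))
    (hfree : ∀ z : A, ∃! c : Fin d → l, z = ∑ i : Fin d, u ^ (i : ℕ) * ι (c i))
    (α : l ≃+* l)
    (hαk : Subring.map α.toRingHom (algebraMap k l).range = (algebraMap k l).range)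
    (hασ : ∀ y : l, α (σ y) = σ (α y))
    (x : l) (hx : α (algebraMap k l a) = algebraMap k l (Algebra.norm k x * a)) :
    ∃ φ : A ≃+* A, ∀ c : Fin d → l,
      φ (∑ i : Fin d, u ^ (i : ℕ) * ι (c i)) =
        ∑ i : Fin d, (u * ι x) ^ (i : ℕ) * ι (α (c i)) :=
  cyclicAlgebra_semilinear_aut_general k l d hdeg σ hσ a ha A ι u hu hcomm hfree α hασ x hx
end
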